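/- Pathwise interchange step: let S₁, S₂ : ℤ → ℕ be service processes and let S̃₂ = D(S₁, S₂) be the departure process of the queue with arrivals S₁ and services S₂. Fix s ≤ t. Suppose that the queue (S₁, S₂) has some unused service time in {s,...,t−1} and let n be the last such time (i.e. the largest n in {s,...,t−1} with S₂(n) > S̃₂(n)), and suppose ∑_{i=s}^{n} S₁(i) ≤ ∑_{i=s}^{n} S̃₂(i). Then min over s ≤ u ≤ t of [∑_{r=s}^{u−1} S₁(r) + ∑_{r=u}^{t−1} S₂(r)] = min over s ≤ u ≤ t of [∑_{r=s}^{u−1} S₁(r) + ∑_{r=u}^{t−1} S̃₂(r)]. (If there is no unused service in {s,...,t−1} the two expressions are trivially equal.) -/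

import Mathlib

/-!
Unused service at time `n` means the queue empties: `X(n+1) = 0`. By conservation of mass
`X(u) + A[u, m) = X(m) + D[u, m)`, the departures then cover the arrivals on every window
`[u, n+1)`. Replacing `S₂` by the smaller `S̃₂` can only lower the functional; it does not
change the terms with switching time `u > n` (there `S̃₂ = S₂`), and a switching time `u ≤ n`
costs at least as much as switching at `n + 1`, because `S̃₂` serves all arrivals of `[u, n+1)`.
-/

/-- Queue length at time `n` for arrivals `A` and services `S`. -/
noncomputable def qX (A S : ℤ → ℕ) (n : ℤ) : ℕ∞ :=
  ⨆ (m : ℤ) (_ : m ≤ n), ((∑ r ∈ Finset.Ico m n, ((A r : ℤ) - (S r : ℤ))).toNat : ℕ∞)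

/-- Departures at time `n`: `min(X(n) + A(n), S(n))`, with `min(∞, s) = s`. -/
noncomputable def qD (A S : ℤ → ℕ) (n : ℤ) : ℕ :=
  (min (qX A S n + (A n : ℕ∞)) ((S n : ℕ∞))).toNat

open Finset

lemma sum_Ico_add_sum_Ico {α M : Type*} [LinearOrder α] [LocallyFiniteOrder α]
    [AddCommMonoid M] (f : α → M) {a b c : α} (hab : a ≤ b) (hbc : b ≤ c) :
    ∑ x ∈ Ico a b, f x + ∑ x ∈ Ico b c, f x = ∑ x ∈ Ico a c, f x := by
  rw [← sum_union (Ico_disjoint_Ico_consecutive a b c), Ico_union_Ico_eq_Ico hab hbc]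

section Queue

variable (A S : ℤ → ℕ)

lemma natCast_toNat_sum_le_qX {m n : ℤ} (h : m ≤ n) :
    ((∑ r ∈ Ico m n, ((A r : ℤ) - S r)).toNat : ℕ∞) ≤ qX A S n :=
  le_iSup₂ (f := fun m (_ : m ≤ n) => ((∑ r ∈ Ico m n, ((A r : ℤ) - S r)).toNat : ℕ∞)) m h

/-- Lindley's recursion, valid also when `qX A S n = ⊤`. -/
lemma qX_add_one (n : ℤ) : qX A S (n + 1) = qX A S n + A n - S n := by
  have step : ∀ m ≤ n, ∑ r ∈ Ico m (n + 1), ((A r : ℤ) - S r)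
      = ∑ r ∈ Ico m n, ((A r : ℤ) - S r) + (A n - S n) :=
    fun m hm => (sum_Ico_add_eq_sum_Ico_add_one hm _).symm
  apply le_antisymm
  · refine iSup₂_le fun m hm => ?_
    rcases hm.eq_or_lt with rfl | hm
    · simp
    · have hP := natCast_toNat_sum_le_qX A S (Int.lt_add_one_iff.mp hm)
      rw [step m (Int.lt_add_one_iff.mp hm)]
      generalize ∑ r ∈ Ico m n, ((A r : ℤ) - S r) = P at hP ⊢
      calc ((P + (A n - S n)).toNat : ℕ∞) ≤ ((P.toNat + A n - S n : ℕ) : ℕ∞) :=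
            Nat.cast_le.mpr (by omega)
        _ = P.toNat + A n - S n := by rw [ENat.natCast_sub, Nat.cast_add]
        _ ≤ qX A S n + A n - S n := by gcongr
  · rw [tsub_le_iff_right, qX, ENat.biSup_add' (p := (· ≤ n)) ⟨n, le_rfl⟩]
    refine iSup₂_le fun m hm => ?_
    have hP := natCast_toNat_sum_le_qX A S (show m ≤ n + 1 by omega)
    -- when the sum over `[m, n)` is negative, the window `[n, n + 1)` does the job instead
    have hn := natCast_toNat_sum_le_qX A S (show n ≤ n + 1 by omega)
    rw [step m hm] at hP
    rw [step n le_rfl, Ico_self, sum_empty, zero_add] at hn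
    generalize ∑ r ∈ Ico m n, ((A r : ℤ) - S r) = P at hP ⊢
    calc (P.toNat : ℕ∞) + A n
        ≤ ((P + (A n - S n)).toNat ⊔ ((A n : ℤ) - S n).toNat : ℕ) + (S n : ℕ∞) := by
          exact_mod_cast (show P.toNat + A n
            ≤ (P + (A n - S n)).toNat ⊔ ((A n : ℤ) - S n).toNat + S n by omega)
      _ ≤ qX A S (n + 1) + S n := by
          gcongr
          exact Nat.mono_cast.map_max.trans_le (max_le hP hn)

lemma natCast_qD (n : ℤ) : (qD A S n : ℕ∞) = min (qX A S n + A n) (S n) :=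
  ENat.natCast_toNat (ne_top_of_le_ne_top (ENat.natCast_ne_top _) (min_le_right _ _))

lemma qD_le (n : ℤ) : qD A S n ≤ S n := by
  have h := (natCast_qD A S n).trans_le (min_le_right _ _)
  exact_mod_cast h

lemma qD_add_qX_add_one (n : ℤ) : qD A S n + qX A S (n + 1) = qX A S n + A n := by
  rw [natCast_qD, qX_add_one, add_comm, tsub_add_min]

lemma qX_add_sum_eq_qX_add_sum_qD {u m : ℤ} (h : u ≤ m) :
    qX A S u + ∑ r ∈ Ico u m, (A r : ℕ∞) = qX A S m + ∑ r ∈ Ico u m, (qD A S r : ℕ∞) := by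
  induction m, h using Int.leInduction with
  | base => simp
  | succ m hum ih =>
    rw [← sum_Ico_add_eq_sum_Ico_add_one hum, ← sum_Ico_add_eq_sum_Ico_add_one hum,
      ← add_assoc, ih, add_right_comm (qX A S m), ← qD_add_qX_add_one]
    ring

lemma qX_add_one_eq_zero_of_qD_lt {n : ℤ} (h : qD A S n < S n) : qX A S (n + 1) = 0 := by
  have hlt : (qD A S n : ℕ∞) < S n := by exact_mod_cast h
  rw [natCast_qD, min_lt_iff, lt_self_iff_false, or_false] at hlt
  rw [qX_add_one, tsub_eq_zero_of_le hlt.le]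

lemma sum_le_sum_qD_of_qX_eq_zero {u m : ℤ} (hum : u ≤ m) (hm : qX A S m = 0) :
    ∑ r ∈ Ico u m, A r ≤ ∑ r ∈ Ico u m, qD A S r := by
  have h := qX_add_sum_eq_qX_add_sum_qD A S hum
  rw [hm, zero_add] at h
  have hle : ∑ r ∈ Ico u m, (A r : ℕ∞) ≤ ∑ r ∈ Ico u m, (qD A S r : ℕ∞) := h ▸ le_add_self
  exact_mod_cast hle

end Queue

noncomputable def tandemMin (A S : ℤ → ℕ) (s t : ℤ) : ℕ :=
  sInf {x : ℕ | ∃ u : ℤ, s ≤ u ∧ u ≤ t ∧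
    x = ∑ r ∈ Ico s u, A r + ∑ r ∈ Ico u t, S r}

section TandemMin

variable {A S S' : ℤ → ℕ} {s t : ℤ}

lemma tandemMin_le {u : ℤ} (hsu : s ≤ u) (hut : u ≤ t) :
    tandemMin A S s t ≤ ∑ r ∈ Ico s u, A r + ∑ r ∈ Ico u t, S r :=
  Nat.sInf_le ⟨u, hsu, hut, rfl⟩

lemma le_tandemMin {c : ℕ} (hst : s ≤ t)
    (h : ∀ u, s ≤ u → u ≤ t → c ≤ ∑ r ∈ Ico s u, A r + ∑ r ∈ Ico u t, S r) :
    c ≤ tandemMin A S s t := by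
  refine le_csInf ⟨_, t, hst, le_rfl, rfl⟩ ?_
  rintro _ ⟨u, hsu, hut, rfl⟩
  exact h u hsu hut

lemma tandemMin_mono (hst : s ≤ t) (hS : ∀ r, S' r ≤ S r) :
    tandemMin A S' s t ≤ tandemMin A S s t :=
  le_tandemMin hst fun u hsu hut =>
    (tandemMin_le hsu hut).trans (by gcongr with r; exact hS r)

lemma tandemMin_eq_of_eq_from {p : ℤ} (hsp : s ≤ p) (hpt : p ≤ t) (hS : ∀ r, S' r ≤ S r)
    (heq : ∀ r, p ≤ r → r < t → S' r = S r)
    (hserve : ∀ u, s ≤ u → u ≤ p → ∑ r ∈ Ico u p, A r ≤ ∑ r ∈ Ico u p, S' r) :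
    tandemMin A S s t = tandemMin A S' s t := by
  have htail : ∀ u, p ≤ u → ∑ r ∈ Ico u t, S' r = ∑ r ∈ Ico u t, S r := fun u hpu =>
    sum_congr rfl fun r hr => heq r (hpu.trans (mem_Ico.mp hr).1) (mem_Ico.mp hr).2
  refine le_antisymm ?_ (tandemMin_mono (hsp.trans hpt) hS)
  refine le_tandemMin (hsp.trans hpt) fun u hsu hut => ?_
  rcases le_total p u with hpu | hup
  · rw [htail u hpu]
    exact tandemMin_le hsu hut
  · calc tandemMin A S s t ≤ ∑ r ∈ Ico s p, A r + ∑ r ∈ Ico p t, S r := tandemMin_le hsp hpt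
      _ = ∑ r ∈ Ico s u, A r + ∑ r ∈ Ico u p, A r + ∑ r ∈ Ico p t, S' r := by
        rw [sum_Ico_add_sum_Ico A hsu hup, htail p le_rfl]
      _ ≤ ∑ r ∈ Ico s u, A r + ∑ r ∈ Ico u p, S' r + ∑ r ∈ Ico p t, S' r := by
        gcongr ∑ r ∈ Ico s u, A r + ?_ + _; exact hserve u hsu hup
      _ = ∑ r ∈ Ico s u, A r + ∑ r ∈ Ico u t, S' r := by
        rw [add_assoc, sum_Ico_add_sum_Ico S' hup hpt]

end TandemMin

theorem interchange_step_general (S₁ S₂ : ℤ → ℕ)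
    (s t n : ℤ) (hsn : s ≤ n) (hnt : n < t)
    (hunused : qD S₁ S₂ n < S₂ n)
    (hlast : ∀ k : ℤ, n < k → k < t → qD S₁ S₂ k = S₂ k) :
    sInf {x : ℕ | ∃ u : ℤ, s ≤ u ∧ u ≤ t ∧
        x = ∑ r ∈ Finset.Ico s u, S₁ r + ∑ r ∈ Finset.Ico u t, S₂ r}
      = sInf {x : ℕ | ∃ u : ℤ, s ≤ u ∧ u ≤ t ∧
        x = ∑ r ∈ Finset.Ico s u, S₁ r + ∑ r ∈ Finset.Ico u t, qD S₁ S₂ r} := by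
  have hempty := qX_add_one_eq_zero_of_qD_lt S₁ S₂ hunused
  exact tandemMin_eq_of_eq_from (p := n + 1) (by omega) (by omega) (qD_le S₁ S₂)
    (fun k hk hkt => hlast k (by omega) hkt)
    (fun u _ hu => sum_le_sum_qD_of_qX_eq_zero S₁ S₂ hu hempty)

/-- Pathwise interchange step: removing the unused services after the last
unused-service time does not change the two-queue variational functional.
Here `S̃₂ = D(S₁,S₂)` is the departure process of the queue feeding `S₁` into `S₂`,
`n` is the last time in `{s,…,t−1}` with unused service, and we assume that by
time `n` cumulative departures dominate cumulative arrivals. -/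
theorem interchange_step (S₁ S₂ : ℤ → ℕ)
    (hfin : ∀ m : ℤ, qX S₁ S₂ m ≠ ⊤)
    (s t n : ℤ) (hst : s ≤ t) (hsn : s ≤ n) (hnt : n < t)
    (hunused : qD S₁ S₂ n < S₂ n)
    (hlast : ∀ k : ℤ, n < k → k < t → qD S₁ S₂ k = S₂ k)
    (hsum : ∑ i ∈ Finset.Icc s n, S₁ i ≤ ∑ i ∈ Finset.Icc s n, qD S₁ S₂ i) :
    sInf {x : ℕ | ∃ u : ℤ, s ≤ u ∧ u ≤ t ∧
        x = ∑ r ∈ Finset.Ico s u, S₁ r + ∑ r ∈ Finset.Ico u t, S₂ r}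
      = sInf {x : ℕ | ∃ u : ℤ, s ≤ u ∧ u ≤ t ∧
        x = ∑ r ∈ Finset.Ico s u, S₁ r + ∑ r ∈ Finset.Ico u t, qD S₁ S₂ r} :=
  interchange_step_general S₁ S₂ s t n hsn hnt hunused hlast
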